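/- arXiv:2503.03621 — 11 statements merged into one kernel-verified Lean document; each statement's English description precedes it below -/
import Mathlib

section
/- Let A = !![a, b; c, d] be a 2×2 integer matrix with b*c ≠ 0. Then there exists a 2×2 integer matrix B = !![a₁, b₁; c₁, 0] with b₁*c₁ ≠ 0 and gcd(a₁, gcd(b₁, c₁)) = 1 such that the centralizer of A in M₂(ℤ) equals the centralizer of B in M₂(ℤ). -/
/-!
Writing `g = gcd (a - d, b, c)` and `a - d = g a₁`, `b = g b₁`, `c = g c₁`, we have
`A = d • 1 + g • !![a₁, b₁; c₁, 0]`. Adding a scalar matrix does not change the centralizer, and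
neither does multiplying by a nonzero integer, since `M₂(ℤ)` is torsion free.
-/

theorem Commute.smul_left_iff_of_isSMulRegular {R M : Type*} [Mul M] [SMul R M]
    [SMulCommClass R M M] [IsScalarTower R M M] {r : R} (hr : IsSMulRegular M r) {x y : M} :
    Commute (r • x) y ↔ Commute x y := by
  refine ⟨fun h => hr ?_, fun h => h.smul_left r⟩
  simpa only [smul_mul_assoc, mul_smul_comm] using h.eq

theorem Algebra.commute_algebraMap_add_left_iff {R M : Type*} [CommSemiring R] [Ring M]
    [Algebra R M] (s : R) {x y : M} : Commute (algebraMap R M s + x) y ↔ Commute x y :=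
  ⟨fun h => by simpa using h.sub_left (commute_algebraMap_left s y),
    (commute_algebraMap_left s y).add_left⟩

theorem Int.exists_gcd_eq_one_of_ne_zero {x y z : ℤ} (hz : z ≠ 0) :
    ∃ g x' y' z' : ℤ, g ≠ 0 ∧ Int.gcd x' (Int.gcd y' z') = 1 ∧
      x = g * x' ∧ y = g * y' ∧ z = g * z' := by
  obtain ⟨g, hg⟩ : ∃ g : ℕ, Int.gcd x (Int.gcd y z) = g := ⟨_, rfl⟩
  have hg0 : g ≠ 0 := by simp [← hg, Int.gcd_eq_zero_iff, hz]
  have hgyz : (g : ℤ) ∣ Int.gcd y z := hg ▸ Int.gcd_dvd_right _ _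
  obtain ⟨x', hx⟩ : (g : ℤ) ∣ x := hg ▸ Int.gcd_dvd_left _ _
  obtain ⟨y', hy⟩ : (g : ℤ) ∣ y := hgyz.trans (Int.gcd_dvd_left _ _)
  obtain ⟨z', hz⟩ : (g : ℤ) ∣ z := hgyz.trans (Int.gcd_dvd_right _ _)
  refine ⟨g, x', y', z', by exact_mod_cast hg0, ?_, hx, hy, hz⟩
  have hgcd : g * 1 = g * Int.gcd x' (Int.gcd y' z') := calc
    g * 1 = Int.gcd x (Int.gcd y z) := by rw [mul_one, hg]
    _ = g * Int.gcd x' (Int.gcd y' z') := by simp [hx, hy, hz, Int.gcd_mul_left]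
  exact (Nat.eq_of_mul_eq_mul_left (Nat.pos_of_ne_zero hg0) hgcd).symm

theorem stmt_0 (a b c d : ℤ) (hbc : b * c ≠ 0) :
    ∃ a₁ b₁ c₁ : ℤ, b₁ * c₁ ≠ 0 ∧ Int.gcd a₁ (Int.gcd b₁ c₁) = 1 ∧
      {B : Matrix (Fin 2) (Fin 2) ℤ | !![a, b; c, d] * B = B * !![a, b; c, d]} =
      {B : Matrix (Fin 2) (Fin 2) ℤ | !![a₁, b₁; c₁, 0] * B = B * !![a₁, b₁; c₁, 0]} := by
  obtain ⟨g, a₁, b₁, c₁, hg, hgcd, ha, hb, hc⟩ :=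
    Int.exists_gcd_eq_one_of_ne_zero (x := a - d) (y := b) (right_ne_zero_of_mul hbc)
  have hA : !![a, b; c, d] = algebraMap ℤ _ d + g • !![a₁, b₁; c₁, 0] := by
    ext i j
    fin_cases i <;> fin_cases j <;> simp [Matrix.intCast_apply, ← ha, hb, hc]
  refine ⟨a₁, b₁, c₁, fun h => hbc ?_, hgcd, Set.ext fun B => ?_⟩
  · rw [hb, hc, mul_mul_mul_comm, h, mul_zero]
  · change Commute _ B ↔ Commute _ B
    rw [hA, Algebra.commute_algebraMap_add_left_iff,
      Commute.smul_left_iff_of_isSMulRegular (IsSMulRegular.of_ne_zero hg)]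
end

section
/- Let A = !![a, b; c, 0] be a 2×2 integer matrix with b*c ≠ 0 and gcd(a, gcd(b, c)) = 1. Then the centralizer of A in M₂(ℤ) equals {x • 1 + t • A : x, t ∈ ℤ}, i.e., a matrix B ∈ M₂(ℤ) commutes with A if and only if B = x • 1 + t • A for some integers x and t. -/
/-! The commutation relation `A B = B A` for `A = !![a, b; c, d]` and `B = !![p, q; r, s]` says
exactly that the vectors `(p - s, q, r)` and `(a - d, b, c)` have vanishing 2×2 minors. When
`(a - d, b, c)` is unimodular, a Bézout combination `α (a - d) + β b + γ c = 1` upgrades this to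
`(p - s, q, r) = t (a - d, b, c)` with `t = α (p - s) + β q + γ r`, and then
`B = (s - t d) • 1 + t • A`. -/

variable {R : Type*} [CommRing R]

theorem exists_eq_mul_of_minors_eq_zero {u v w x y z α β γ : R}
    (hunit : α * u + β * v + γ * w = 1)
    (huv : u * y = v * x) (huw : u * z = w * x) (hvw : v * z = w * y) :
    ∃ t, x = t * u ∧ y = t * v ∧ z = t * w := by
  refine ⟨α * x + β * y + γ * z, ?_, ?_, ?_⟩
  · linear_combination (-x) * hunit - β * huv - γ * huw
  · linear_combination (-y) * hunit + α * huv - γ * hvw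
  · linear_combination (-z) * hunit + α * huw + β * hvw

theorem Matrix.fin_two_mul_comm_iff (a b c d p q r s : R) :
    !![a, b; c, d] * !![p, q; r, s] = !![p, q; r, s] * !![a, b; c, d] ↔
      (a - d) * q = b * (p - s) ∧ (a - d) * r = c * (p - s) ∧ b * r = c * q := by
  simp only [Matrix.mul_fin_two, EmbeddingLike.apply_eq_iff_eq, Matrix.vecCons_inj, and_true]
  constructor
  · rintro ⟨⟨h00, h01⟩, h10, -⟩
    exact ⟨by linear_combination h01, by linear_combination -h10, by linear_combination h00⟩
  · rintro ⟨h1, h2, h3⟩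
    exact ⟨⟨by linear_combination h3, by linear_combination h1⟩, by linear_combination -h2,
      by linear_combination -h3⟩

theorem Matrix.fin_two_mul_comm_iff_exists_smul_one_add_smul {a b c d α β γ : R}
    (hunit : α * (a - d) + β * b + γ * c = 1) (B : Matrix (Fin 2) (Fin 2) R) :
    !![a, b; c, d] * B = B * !![a, b; c, d] ↔ ∃ x t : R, B = x • 1 + t • !![a, b; c, d] := by
  constructor
  · rw [B.eta_fin_two, Matrix.fin_two_mul_comm_iff]
    rintro ⟨h1, h2, h3⟩
    obtain ⟨t, hp, hq, hr⟩ := exists_eq_mul_of_minors_eq_zero hunit h1 h2 h3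
    have hp' : B 0 0 = B 1 1 - t * d + t * a := by linear_combination hp
    refine ⟨B 1 1 - t * d, t, ?_⟩
    ext i j
    fin_cases i <;> fin_cases j <;> simp [hp', hq, hr]
  · rintro ⟨x, t, rfl⟩
    exact (((Commute.one_right _).smul_right x).add_right ((Commute.refl _).smul_right t)).eq

theorem Int.exists_mul_add_mul_add_mul_eq_one {a b c : ℤ} (h : Int.gcd a (Int.gcd b c) = 1) :
    ∃ α β γ : ℤ, α * a + β * b + γ * c = 1 := by
  have hbc := Int.gcd_eq_gcd_ab b c
  have habc := Int.gcd_eq_gcd_ab a (Int.gcd b c)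
  rw [h, Nat.cast_one] at habc
  exact ⟨a.gcdA (b.gcd c), a.gcdB (b.gcd c) * b.gcdA c, a.gcdB (b.gcd c) * b.gcdB c, by
    linear_combination -habc - a.gcdB (b.gcd c) * hbc⟩

theorem stmt_1_general (a b c : ℤ)
    (hgcd : Int.gcd a (Int.gcd b c) = 1) :
    {B : Matrix (Fin 2) (Fin 2) ℤ | !![a, b; c, 0] * B = B * !![a, b; c, 0]} =
      {B : Matrix (Fin 2) (Fin 2) ℤ | ∃ x t : ℤ, B = x • (1 : Matrix (Fin 2) (Fin 2) ℤ) + t • !![a, b; c, 0]} := by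
  obtain ⟨α, β, γ, hunit⟩ := Int.exists_mul_add_mul_add_mul_eq_one hgcd
  rw [← sub_zero a] at hunit
  exact Set.ext (Matrix.fin_two_mul_comm_iff_exists_smul_one_add_smul hunit)

theorem stmt_1 (a b c : ℤ) (hbc : b * c ≠ 0)
    (hgcd : Int.gcd a (Int.gcd b c) = 1) :
    {B : Matrix (Fin 2) (Fin 2) ℤ | !![a, b; c, 0] * B = B * !![a, b; c, 0]} =
      {B : Matrix (Fin 2) (Fin 2) ℤ | ∃ x t : ℤ, B = x • (1 : Matrix (Fin 2) (Fin 2) ℤ) + t • !![a, b; c, 0]} :=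
  stmt_1_general a b c hgcd
end

section
/- Let A = !![a, b; c, 0] be a 2×2 integer matrix with b*c ≠ 0 and gcd(a, gcd(b, c)) = 1. Then the centralizer C(A) = {B ∈ M₂(ℤ) : A*B = B*A} is a commutative subring of M₂(ℤ) containing the identity matrix. -/
/-! If `A` commutes with `X` and `q = A 0 1`, then comparing entries shows that `q • X` is a
linear combination of `A` and `1`. Hence for `X`, `Y` in the centralizer of `A`, the matrices
`q • X` and `q • Y` commute, and cancelling `q² ≠ 0` gives `X * Y = Y * X`. -/

namespace Matrix

variable {R : Type*} [CommRing R]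

theorem smul_eq_of_commute_fin_two {A X : Matrix (Fin 2) (Fin 2) R} (h : Commute A X) :
    A 0 1 • X = X 0 1 • A + (A 0 1 * X 0 0 - X 0 1 * A 0 0) • 1 := by
  have e00 := congrFun₂ h.eq 0 0
  have e01 := congrFun₂ h.eq 0 1
  simp only [Fin.isValue, mul_apply, Fin.sum_univ_two] at e00 e01
  ext i j
  fin_cases i <;> fin_cases j <;>
    simp only [Fin.isValue, Fin.zero_eta, Fin.mk_one, smul_apply, smul_eq_mul, add_apply,
      one_apply_eq, one_apply_ne, ne_eq, zero_ne_one, one_ne_zero, not_false_eq_true, mul_one,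
      mul_zero, add_zero, add_sub_cancel]
  · ring
  · linear_combination e00
  · linear_combination e01

theorem commute_of_commute_fin_two [NoZeroDivisors R] {A X Y : Matrix (Fin 2) (Fin 2) R}
    (hA : A 0 1 ≠ 0) (hX : Commute A X) (hY : Commute A Y) : Commute X Y := by
  have hXY : Commute (A 0 1 • X) (A 0 1 • Y) := by
    rw [smul_eq_of_commute_fin_two hX, smul_eq_of_commute_fin_two hY]
    apply_rules [Commute.add_left, Commute.add_right, Commute.smul_left, Commute.smul_right,
      Commute.one_left, Commute.one_right, Commute.refl]
  have : (A 0 1 * A 0 1) • (X * Y) = (A 0 1 * A 0 1) • (Y * X) := by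
    simpa only [smul_mul_smul_comm] using hXY.eq
  exact smul_right_injective _ (mul_ne_zero hA hA) this

end Matrix

theorem stmt_2_general (a b c : ℤ) (hbc : b * c ≠ 0) :
    let A : Matrix (Fin 2) (Fin 2) ℤ := !![a, b; c, 0]
    let C : Set (Matrix (Fin 2) (Fin 2) ℤ) := {B | A * B = B * A}
    (1 : Matrix (Fin 2) (Fin 2) ℤ) ∈ C ∧
    (∀ X ∈ C, ∀ Y ∈ C, X + Y ∈ C) ∧
    (∀ X ∈ C, -X ∈ C) ∧
    (∀ X ∈ C, ∀ Y ∈ C, X * Y ∈ C) ∧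
    (∀ X ∈ C, ∀ Y ∈ C, X * Y = Y * X) := by
  intro A C
  have hb : A 0 1 ≠ 0 := left_ne_zero_of_mul hbc
  exact ⟨Commute.one_right A, fun _ hX _ hY => Commute.add_right hX hY,
    fun _ hX => Commute.neg_right hX, fun _ hX _ hY => Commute.mul_right hX hY,
    fun _ hX _ hY => Matrix.commute_of_commute_fin_two hb hX hY⟩

theorem stmt_2 (a b c : ℤ) (hbc : b * c ≠ 0)
    (hgcd : Int.gcd a (Int.gcd b c) = 1) :
    let A : Matrix (Fin 2) (Fin 2) ℤ := !![a, b; c, 0]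
    let C : Set (Matrix (Fin 2) (Fin 2) ℤ) := {B | A * B = B * A}
    (1 : Matrix (Fin 2) (Fin 2) ℤ) ∈ C ∧
    (∀ X ∈ C, ∀ Y ∈ C, X + Y ∈ C) ∧
    (∀ X ∈ C, -X ∈ C) ∧
    (∀ X ∈ C, ∀ Y ∈ C, X * Y ∈ C) ∧
    (∀ X ∈ C, ∀ Y ∈ C, X * Y = Y * X) :=
  stmt_2_general a b c hbc
end

section
/- Let A = !![a, b; c, 0] be a 2×2 integer matrix with b*c ≠ 0 and gcd(a, gcd(b, c)) = 1. If a² + 4*b*c is a perfect square, then there exist nonzero matrices B₁, B₂ in the centralizer C(A) with B₁ * B₂ = 0; conversely, if a² + 4*b*c is not a perfect square, then for all B₁, B₂ ∈ C(A) with B₁ ≠ 0 and B₂ ≠ 0, one has B₁ * B₂ ≠ 0. -/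
/-!
The commutation relations force `(B₀₀ - B₁₁, B₀₁, B₁₀)` to be an integer multiple `y` of the
primitive vector `(A₀₀ - A₁₁, A₀₁, A₁₀)`, so the centralizer of `A` is `ℤ[A] = {s + y A}`.
Since `4 det (s + y A) = (2 s + y tr A)² - y² disc A`, a nonzero singular element of `ℤ[A]`
exists exactly when `disc A` is a perfect square. If `disc A = k²`, Cayley–Hamilton factors
`4 (A² - tr A · A + det A)` as `(2A + k - tr A)(2A - k - tr A)`; conversely `B₁ B₂ = 0`
forces `det B₁ det B₂ = 0`.
-/

open Polynomial

namespace Matrix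

variable {R : Type*} [CommRing R]

theorem four_mul_det_smul_one_add_smul (A : Matrix (Fin 2) (Fin 2) R) (s y : R) :
    4 * (s • 1 + y • A).det = (2 * s + y * A.trace) ^ 2 - y ^ 2 * A.discr := by
  rw [discr_fin_two, det_fin_two, det_fin_two, trace_fin_two]
  simp only [add_apply, smul_apply, smul_eq_mul, one_apply_eq, one_apply_ne zero_ne_one,
    one_apply_ne one_ne_zero, mul_one, mul_zero, zero_add]
  ring

theorem smul_one_add_two_smul_mul_eq_zero_of_discr_eq_sq (A : Matrix (Fin 2) (Fin 2) R) {k : R}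
    (hk : A.discr = k ^ 2) :
    ((k - A.trace) • 1 + (2 : R) • A) * (-(k + A.trace) • 1 + (2 : R) • A) = 0 := by
  nontriviality R
  have hfactor :
      (C (k - A.trace) + C 2 * X) * (C (-(k + A.trace)) + C 2 * X) = 4 * A.charpoly := by
    rw [discr_fin_two] at hk
    rw [charpoly_fin_two]
    have hkC := congrArg C hk
    simp only [map_sub, map_pow, map_mul, map_neg, map_add, map_ofNat] at hkC ⊢
    linear_combination hkC
  simpa [aeval_self_charpoly, Algebra.algebraMap_eq_smul_one, map_ofNat, sub_smul, add_smul,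
    neg_smul, two_smul, two_mul] using congrArg (aeval A) hfactor

theorem exists_eq_smul_one_add_smul_of_commute {A B : Matrix (Fin 2) (Fin 2) ℤ}
    (hA : Int.gcd (A 0 0 - A 1 1) (Int.gcd (A 0 1) (A 1 0)) = 1) (hAB : Commute A B) :
    ∃ s y : ℤ, B = s • 1 + y • A := by
  obtain ⟨u, g, hug⟩ := Int.isCoprime_iff_gcd_eq_one.mpr hA
  set v := g * Int.gcdA (A 0 1) (A 1 0)
  set w := g * Int.gcdB (A 0 1) (A 1 0)
  have hbezout : u * (A 0 0 - A 1 1) + v * A 0 1 + w * A 1 0 = 1 := by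
    rw [Int.gcd_eq_gcd_ab] at hug
    linear_combination hug
  have h00 := congr_fun (congr_fun hAB.eq 0) 0
  have h01 := congr_fun (congr_fun hAB.eq 0) 1
  have h10 := congr_fun (congr_fun hAB.eq 1) 0
  simp only [mul_apply, Fin.sum_univ_two] at h00 h01 h10
  set y := u * (B 0 0 - B 1 1) + v * B 0 1 + w * B 1 0
  have hdiag : B 0 0 - B 1 1 = y * (A 0 0 - A 1 1) := by
    linear_combination -(B 0 0 - B 1 1) * hbezout - v * h01 + w * h10
  have hupper : B 0 1 = y * A 0 1 := by
    linear_combination -B 0 1 * hbezout + u * h01 - w * h00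
  have hlower : B 1 0 = y * A 1 0 := by
    linear_combination -B 1 0 * hbezout - u * h10 + v * h00
  refine ⟨B 1 1 - y * A 1 1, y, ?_⟩
  ext i j
  fin_cases i <;> fin_cases j <;>
    simp only [Fin.zero_eta, Fin.mk_one, add_apply, smul_apply, smul_eq_mul, one_apply_eq,
      one_apply_ne zero_ne_one, one_apply_ne one_ne_zero, mul_one, mul_zero, zero_add]
  exacts [by linear_combination hdiag, hupper, hlower, by ring]

theorem isSquare_discr_of_commute_of_det_eq_zero {A B : Matrix (Fin 2) (Fin 2) ℤ}
    (hA : Int.gcd (A 0 0 - A 1 1) (Int.gcd (A 0 1) (A 1 0)) = 1) (hAB : Commute A B)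
    (hB : B ≠ 0) (hdet : B.det = 0) : IsSquare A.discr := by
  obtain ⟨s, y, rfl⟩ := exists_eq_smul_one_add_smul_of_commute hA hAB
  have key := four_mul_det_smul_one_add_smul A s y
  rw [hdet, mul_zero] at key
  rcases eq_or_ne y 0 with rfl | hy
  · have hs : s = 0 := by simpa using key.symm
    simp [hs] at hB
  · rw [← Rat.isSquare_intCast_iff]
    refine ⟨(2 * s + y * A.trace) / y, ?_⟩
    field_simp
    exact_mod_cast (by linear_combination key : A.discr * y ^ 2 = (2 * s + y * A.trace) ^ 2)

end Matrix

open Matrix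

theorem stmt_3 (a b c : ℤ) (hbc : b * c ≠ 0)
    (hgcd : Int.gcd a (Int.gcd b c) = 1) :
    let A : Matrix (Fin 2) (Fin 2) ℤ := !![a, b; c, 0]
    let C : Set (Matrix (Fin 2) (Fin 2) ℤ) := {B | A * B = B * A}
    ((∃ k : ℤ, a ^ 2 + 4 * b * c = k ^ 2) →
      ∃ B₁ ∈ C, ∃ B₂ ∈ C, B₁ ≠ 0 ∧ B₂ ≠ 0 ∧ B₁ * B₂ = 0) ∧
    ((¬ ∃ k : ℤ, a ^ 2 + 4 * b * c = k ^ 2) →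
      ∀ B₁ ∈ C, ∀ B₂ ∈ C, B₁ ≠ 0 → B₂ ≠ 0 → B₁ * B₂ ≠ 0) := by
  intro A C
  have hA : Int.gcd (A 0 0 - A 1 1) (Int.gcd (A 0 1) (A 1 0)) = 1 := by simpa [A] using hgcd
  have htrace : A.trace = a := by simp [A]
  have hdiscr : A.discr = a ^ 2 + 4 * b * c := by
    simp only [A, discr_fin_two, trace_fin_two_of, det_fin_two_of]
    ring
  refine ⟨fun ⟨k, hk⟩ => ?_, fun hnsq B₁ hB₁ B₂ hB₂ hB₁0 hB₂0 hprod => hnsq ?_⟩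
  · have hmem (t : ℤ) : t • 1 + (2 : ℤ) • A ∈ C :=
      ((Commute.one_right A).smul_right t).add_right ((Commute.refl A).smul_right 2)
    have hne (t : ℤ) : t • 1 + (2 : ℤ) • A ≠ 0 := fun h => by
      have h01 := congr_fun (congr_fun h 0) 1
      simp only [Matrix.add_apply, Matrix.smul_apply, one_apply_ne zero_ne_one, smul_zero,
        zero_add] at h01
      exact left_ne_zero_of_mul hbc (by simpa [A] using h01)
    refine ⟨_, hmem (k - a), _, hmem (-(k + a)), hne _, hne _, ?_⟩
    simpa [htrace] using smul_one_add_two_smul_mul_eq_zero_of_discr_eq_sq A (hdiscr.trans hk)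
  · have hdet : B₁.det * B₂.det = 0 := by rw [← det_mul, hprod, det_zero]
    obtain ⟨k, hk⟩ : IsSquare A.discr := by
      rcases mul_eq_zero.mp hdet with h | h
      exacts [isSquare_discr_of_commute_of_det_eq_zero hA hB₁ hB₁0 h,
        isSquare_discr_of_commute_of_det_eq_zero hA hB₂ hB₂0 h]
    exact ⟨k, by rw [← hdiscr, hk, sq]⟩
end

section
/- Let A = !![a, b; c, 0] be a 2×2 integer matrix with b*c ≠ 0 and gcd(a, gcd(b, c)) = 1, and suppose a² + 4*b*c is not a perfect square. Then every nonzero matrix B in the centralizer C(A) has nonzero determinant. -/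
/-!
If `B` commutes with a `2 × 2` matrix `A` and `det B = 0`, then the discriminant
`Δ = (tr A)² - 4 det A` of `A` satisfies `Δ x² = y²` for each `x` among `B 0 1`, `B 1 0`,
`B 0 0 - B 1 1` (with `y` an explicit multiple of `tr B`). A nonzero singular `B` is not
scalar, so one of these `x` is nonzero, and in an integrally closed domain `Δ x² = y²` with
`x ≠ 0` forces `Δ` to be a square.
-/

open Matrix

theorem isSquare_of_mul_sq_eq_sq {R : Type*} [CommRing R] [IsDomain R] [IsIntegrallyClosed R]
    {x t y : R} (ht : t ≠ 0) (h : x * t ^ 2 = y ^ 2) : IsSquare x := by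
  obtain ⟨k, rfl⟩ : t ∣ y :=
    (IsIntegrallyClosed.pow_dvd_pow_iff two_ne_zero).mp ⟨x, by rw [← h, mul_comm]⟩
  refine ⟨k, mul_right_cancel₀ (pow_ne_zero 2 ht) ?_⟩
  rw [h]
  ring

namespace Matrix

variable {R : Type*} [CommRing R]

theorem discr_mul_sq_eq_of_commute_of_det_eq_zero {A B : Matrix (Fin 2) (Fin 2) R}
    (hAB : Commute A B) (hB : B.det = 0) :
    (A.trace ^ 2 - 4 * A.det) * B 0 1 ^ 2 = (A 0 1 * B.trace) ^ 2 ∧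
      (A.trace ^ 2 - 4 * A.det) * B 1 0 ^ 2 = (A 1 0 * B.trace) ^ 2 ∧
      (A.trace ^ 2 - 4 * A.det) * (B 0 0 - B 1 1) ^ 2 = ((A 0 0 - A 1 1) * B.trace) ^ 2 := by
  have h00 := congrFun (congrFun hAB.eq 0) 0
  have h01 := congrFun (congrFun hAB.eq 0) 1
  have h10 := congrFun (congrFun hAB.eq 1) 0
  simp only [mul_apply, Fin.sum_univ_two] at h00 h01 h10
  rw [det_fin_two] at hB
  simp only [trace_fin_two, det_fin_two]
  refine ⟨?_, ?_, ?_⟩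
  · linear_combination ((A 0 0 - A 1 1) * B 0 1 + A 0 1 * (B 0 0 - B 1 1)) * h01
      - 4 * A 0 1 * B 0 1 * h00 - 4 * A 0 1 ^ 2 * hB
  · linear_combination -((A 0 0 - A 1 1) * B 1 0 + A 1 0 * (B 0 0 - B 1 1)) * h10
      + 4 * A 1 0 * B 1 0 * h00 - 4 * A 1 0 ^ 2 * hB
  · linear_combination -4 * (A 0 0 - A 1 1) * B 1 0 * h01
      + 4 * A 0 1 * (B 0 0 - B 1 1) * h10 - 4 * (A 0 0 - A 1 1) ^ 2 * hB

theorem eq_zero_of_det_eq_zero_of_scalar [IsReduced R] {B : Matrix (Fin 2) (Fin 2) R}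
    (hB : B.det = 0) (h01 : B 0 1 = 0) (h10 : B 1 0 = 0) (hdiag : B 0 0 - B 1 1 = 0) : B = 0 := by
  rw [det_fin_two, h01, h10, ← sub_eq_zero.mp hdiag] at hB
  have h00 : B 0 0 = 0 := IsReduced.eq_zero _ ⟨2, by simpa [sq] using hB⟩
  ext i j
  fin_cases i <;> fin_cases j <;> simp [h00, h01, h10, ← sub_eq_zero.mp hdiag]

theorem det_ne_zero_of_commute_of_not_isSquare_discr [IsDomain R] [IsIntegrallyClosed R]
    {A B : Matrix (Fin 2) (Fin 2) R}
    (hA : ¬IsSquare (A.trace ^ 2 - 4 * A.det)) (hAB : Commute A B) (hB : B ≠ 0) :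
    B.det ≠ 0 := by
  intro hdet
  obtain ⟨h01, h10, hdiag⟩ := discr_mul_sq_eq_of_commute_of_det_eq_zero hAB hdet
  have eq_zero {x y : R} (h : (A.trace ^ 2 - 4 * A.det) * x ^ 2 = y ^ 2) : x = 0 := by
    by_contra hx
    exact hA (isSquare_of_mul_sq_eq_sq hx h)
  exact hB (eq_zero_of_det_eq_zero_of_scalar hdet (eq_zero h01) (eq_zero h10)
    (eq_zero hdiag))

end Matrix

theorem stmt_4_general (a b c : ℤ)
    (hsq : ¬ ∃ k : ℤ, a ^ 2 + 4 * b * c = k ^ 2)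
    (B : Matrix (Fin 2) (Fin 2) ℤ)
    (hB : !![a, b; c, 0] * B = B * !![a, b; c, 0]) (hB0 : B ≠ 0) :
    B.det ≠ 0 := by
  refine det_ne_zero_of_commute_of_not_isSquare_discr ?_ hB hB0
  rw [isSquare_iff_exists_sq, trace_fin_two_of, det_fin_two_of]
  convert hsq using 4
  ring

theorem stmt_4 (a b c : ℤ) (hbc : b * c ≠ 0)
    (hgcd : Int.gcd a (Int.gcd b c) = 1)
    (hsq : ¬ ∃ k : ℤ, a ^ 2 + 4 * b * c = k ^ 2)
    (B : Matrix (Fin 2) (Fin 2) ℤ)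
    (hB : !![a, b; c, 0] * B = B * !![a, b; c, 0]) (hB0 : B ≠ 0) :
    B.det ≠ 0 :=
  stmt_4_general a b c hsq B hB hB0
end

section
/- Let A = !![a, b; c, 0] be a 2×2 integer matrix with b*c ≠ 0 and gcd(a, gcd(b, c)) = 1, and let u, v, w be nonzero integers with gcd(u, gcd(v, w)) = 1. Suppose a² + 4*b*c is a perfect square. Then for natural numbers i, j, k, the equation u•X^i + v•Y^j = w•Z^k has a solution X, Y, Z in the centralizer C(A) with det(X*Y*Z) ≠ 0 if and only if the equation u*x^i + v*y^j = w*z^k has a solution in nonzero integers x, y, z. -/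
/-!
Since `a² + 4bc` is a square, `A = !![a, b; c, 0]` has an integer eigenvalue `m`, and because
`c ≠ 0` its `m`-eigenspace in `ℤ²` is spanned by one primitive vector `e`. Every `B` commuting
with `A` preserves that eigenspace, so `B e = μ(B) e` for an integer `μ(B)`, which is nonzero when
`det B ≠ 0`. Applying a matrix solution to `e` gives the integer solution `(μ X, μ Y, μ Z)`;
conversely an integer solution `(x, y, z)` gives the scalar matrices `(x • 1, y • 1, z • 1)`.
-/

open Matrix

section Eigenvector

variable {R n : Type*} [CommRing R] [Fintype n]

theorem Matrix.pow_mulVec_of_mulVec_eq_smul [DecidableEq n] {B : Matrix n n R} {v : n → R} {μ : R}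
    (h : B *ᵥ v = μ • v) (k : ℕ) : (B ^ k) *ᵥ v = μ ^ k • v := by
  induction k with
  | zero => simp
  | succ k ih =>
    rw [pow_succ, ← mulVec_mulVec, h, mulVec_smul, ih, smul_smul, pow_succ']

theorem Matrix.mulVec_mulVec_eq_smul_of_commute {A B : Matrix n n R} (hAB : A * B = B * A)
    {v : n → R} {m : R} (hv : A *ᵥ v = m • v) : A *ᵥ (B *ᵥ v) = m • (B *ᵥ v) := by
  rw [mulVec_mulVec, hAB, ← mulVec_mulVec, hv, mulVec_smul]

theorem Matrix.ne_zero_of_mulVec_eq_smul_of_det_ne_zero [IsDomain R] [DecidableEq n]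
    {B : Matrix n n R} {v : n → R} {μ : R} (hv : v ≠ 0) (h : B *ᵥ v = μ • v) (hB : B.det ≠ 0) :
    μ ≠ 0 := by
  rintro rfl
  exact hB (exists_mulVec_eq_zero_iff.mp ⟨v, hv, by rw [h, zero_smul]⟩)

end Eigenvector

theorem IsCoprime.exists_eq_smul_of_mul_eq_mul {R : Type*} [CommRing R] {e f : Fin 2 → R}
    (he : IsCoprime (e 0) (e 1)) (hf : f 0 * e 1 = f 1 * e 0) : ∃ μ : R, f = μ • e := by
  obtain ⟨s, t, hst⟩ := he
  refine ⟨s * f 0 + t * f 1, funext fun i => ?_⟩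
  fin_cases i
  · simp only [Fin.zero_eta, Fin.isValue, Pi.smul_apply, smul_eq_mul]
    linear_combination (-f 0) * hst + t * hf
  · simp only [Fin.mk_one, Fin.isValue, Pi.smul_apply, smul_eq_mul]
    linear_combination (-f 1) * hst - s * hf

theorem Int.exists_sq_eq_of_discrim_eq_sq {a b c k : ℤ} (hk : a ^ 2 + 4 * b * c = k ^ 2) :
    ∃ m : ℤ, m ^ 2 = a * m + b * c := by
  obtain ⟨m, hm⟩ : Even (a + k) := by
    have : Even ((a + k) ^ 2) := ⟨k ^ 2 - 2 * b * c + a * k, by linear_combination hk⟩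
    exact (Int.even_pow.mp this).1
  refine ⟨m, ?_⟩
  have h4 : 4 * (m ^ 2 - a * m - b * c) = 0 := by
    linear_combination -hk + (a - k - 2 * m) * hm
  linarith

section Companion

variable {a b c m : ℤ}

theorem exists_eigenvector_spanning_eigenspace (hc : c ≠ 0) (hm : m ^ 2 = a * m + b * c) :
    ∃ e : Fin 2 → ℤ, e ≠ 0 ∧ !![a, b; c, 0] *ᵥ e = m • e ∧
      ∀ f : Fin 2 → ℤ, !![a, b; c, 0] *ᵥ f = m • f → ∃ μ : ℤ, f = μ • e := by
  -- the eigenspace is the line `c f₀ = m f₁`, generated by `(m, c) / gcd(m, c)`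
  obtain ⟨g, e₀, e₁, hg, he, rfl, rfl⟩ := Int.exists_gcd_one' (Int.gcd_pos_of_ne_zero_right m hc)
  have hg' : (g : ℤ) ≠ 0 := by positivity
  have he₁ : e₁ ≠ 0 := by rintro rfl; simp at hc
  refine ⟨![e₀, e₁], fun h => he₁ (congrFun h 1), funext fun i => ?_, fun f hf => ?_⟩
  · fin_cases i
    · simp only [Fin.zero_eta, Fin.isValue, mulVec, dotProduct, Fin.sum_univ_two, of_apply,
        cons_val', cons_val_zero, cons_val_one, empty_val', cons_val_fin_one,
        Pi.smul_apply, smul_eq_mul]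
      refine mul_left_cancel₀ hg' ?_
      linear_combination -hm
    · simp [mulVec, dotProduct, Fin.sum_univ_two]
      ring
  · refine (Int.isCoprime_iff_gcd_eq_one.mpr he).exists_eq_smul_of_mul_eq_mul ?_
    have h1 := congrFun hf 1
    simp only [mulVec, dotProduct, Fin.isValue, of_apply, cons_val', cons_val_fin_one,
      cons_val_one, Fin.sum_univ_two, cons_val_zero, zero_mul, add_zero, Pi.smul_apply,
      Int.zsmul_eq_mul] at h1
    refine mul_left_cancel₀ hg' ?_
    simp only [cons_val_zero, cons_val_one]
    linear_combination h1

theorem exists_common_eigenvector (hc : c ≠ 0) (hsq : ∃ k : ℤ, a ^ 2 + 4 * b * c = k ^ 2) :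
    ∃ e : Fin 2 → ℤ, e ≠ 0 ∧ ∀ B : Matrix (Fin 2) (Fin 2) ℤ,
      !![a, b; c, 0] * B = B * !![a, b; c, 0] → ∃ μ : ℤ, B *ᵥ e = μ • e := by
  obtain ⟨k, hk⟩ := hsq
  obtain ⟨m, hm⟩ := Int.exists_sq_eq_of_discrim_eq_sq hk
  obtain ⟨e, he, hAe, hspan⟩ := exists_eigenvector_spanning_eigenspace hc hm
  exact ⟨e, he, fun B hB => hspan _ (mulVec_mulVec_eq_smul_of_commute hB hAe)⟩

end Companion

theorem stmt_6_general (a b c u v w : ℤ) (hbc : b * c ≠ 0)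
    (hsq : ∃ k : ℤ, a ^ 2 + 4 * b * c = k ^ 2)
    (i j k : ℕ) :
    (∃ X Y Z : Matrix (Fin 2) (Fin 2) ℤ,
      !![a, b; c, 0] * X = X * !![a, b; c, 0] ∧
      !![a, b; c, 0] * Y = Y * !![a, b; c, 0] ∧
      !![a, b; c, 0] * Z = Z * !![a, b; c, 0] ∧
      (X * Y * Z).det ≠ 0 ∧
      u • X ^ i + v • Y ^ j = w • Z ^ k) ↔
    (∃ x y z : ℤ, x * y * z ≠ 0 ∧ u * x ^ i + v * y ^ j = w * z ^ k) := by
  constructor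
  · rintro ⟨X, Y, Z, hX, hY, hZ, hdet, heq⟩
    obtain ⟨e, he, hcommon⟩ := exists_common_eigenvector (right_ne_zero_of_mul hbc) hsq
    obtain ⟨x, hx⟩ := hcommon X hX
    obtain ⟨y, hy⟩ := hcommon Y hY
    obtain ⟨z, hz⟩ := hcommon Z hZ
    have hxyz : (X * Y * Z) *ᵥ e = (x * y * z) • e := by
      simp only [← mulVec_mulVec, hz, mulVec_smul, hy, hx, smul_smul]
      ring_nf
    refine ⟨x, y, z, ne_zero_of_mulVec_eq_smul_of_det_ne_zero he hxyz hdet,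
      smul_left_injective ℤ he ?_⟩
    have := congrArg (· *ᵥ e) heq
    simpa only [add_mulVec, smul_mulVec, pow_mulVec_of_mulVec_eq_smul hx,
      pow_mulVec_of_mulVec_eq_smul hy, pow_mulVec_of_mulVec_eq_smul hz, smul_smul,
      add_smul] using this
  · rintro ⟨x, y, z, hxyz, heq⟩
    have hscalar (r : ℤ) : !![a, b; c, 0] * (r • 1) = (r • 1) * !![a, b; c, 0] :=
      ((Commute.one_right _).smul_right r).eq
    refine ⟨x • 1, y • 1, z • 1, hscalar x, hscalar y, hscalar z, ?_, ?_⟩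
    · rw [smul_mul_smul_comm, smul_mul_smul_comm, mul_one, mul_one, det_smul, det_one, mul_one]
      exact pow_ne_zero _ hxyz
    · simp only [smul_pow, one_pow, smul_smul, ← add_smul, heq]

theorem stmt_6 (a b c u v w : ℤ) (hbc : b * c ≠ 0)
    (hgcd : Int.gcd a (Int.gcd b c) = 1)
    (hu : u ≠ 0) (hv : v ≠ 0) (hw : w ≠ 0)
    (huvw : Int.gcd u (Int.gcd v w) = 1)
    (hsq : ∃ k : ℤ, a ^ 2 + 4 * b * c = k ^ 2)
    (i j k : ℕ) :
    (∃ X Y Z : Matrix (Fin 2) (Fin 2) ℤ,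
      !![a, b; c, 0] * X = X * !![a, b; c, 0] ∧
      !![a, b; c, 0] * Y = Y * !![a, b; c, 0] ∧
      !![a, b; c, 0] * Z = Z * !![a, b; c, 0] ∧
      (X * Y * Z).det ≠ 0 ∧
      u • X ^ i + v • Y ^ j = w • Z ^ k) ↔
    (∃ x y z : ℤ, x * y * z ≠ 0 ∧ u * x ^ i + v * y ^ j = w * z ^ k) :=
  stmt_6_general a b c u v w hbc hsq i j k
end

section
/- Let A = !![a, b; c, 0] be a 2×2 integer matrix with b*c ≠ 0 and gcd(a, gcd(b, c)) = 1, and let n ≥ 3. If there exist X, Y, Z ∈ C(A) with det(X*Y*Z) ≠ 0 and X^n + Y^n = Z^n, then there exist infinitely many triples (X', Y', Z') of matrices in C(A) with det(X'*Y'*Z') ≠ 0 and X'^n + Y'^n = Z'^n. -/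
/-!
Scalar matrices commute with everything, so multiplying a solution `(X, Y, Z)` in the
centralizer of `A` by a nonzero scalar `k` gives another solution: the equation is homogeneous
of degree `n`, and `det (k • M) = k ^ 2 * det M` stays nonzero over a domain. The scalars
`1, 2, 3, …` give pairwise distinct solutions.
-/

open Matrix

variable {R : Type*} [CommRing R] {m : Type*} [Fintype m] [DecidableEq m]

def fermatTriples (A : Matrix m m R) (n : ℕ) : Set (Matrix m m R × Matrix m m R × Matrix m m R) :=
  {p | Commute A p.1 ∧ Commute A p.2.1 ∧ Commute A p.2.2 ∧
    (p.1 * p.2.1 * p.2.2).det ≠ 0 ∧ p.1 ^ n + p.2.1 ^ n = p.2.2 ^ n}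

theorem smul_mem_fermatTriples [IsDomain R] {A : Matrix m m R} {n : ℕ}
    {p : Matrix m m R × Matrix m m R × Matrix m m R} (hp : p ∈ fermatTriples A n)
    {k : R} (hk : k ≠ 0) : k • p ∈ fermatTriples A n := by
  obtain ⟨hX, hY, hZ, hdet, hfermat⟩ := hp
  have hdet' : (k • p.1 * k • p.2.1 * k • p.2.2).det = k ^ (3 * Fintype.card m) *
      (p.1 * p.2.1 * p.2.2).det := by
    simp only [det_mul, det_smul]
    ring
  refine ⟨hX.smul_right k, hY.smul_right k, hZ.smul_right k, ?_, ?_⟩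
  · simpa only [Prod.smul_fst, Prod.smul_snd, hdet'] using mul_ne_zero (pow_ne_zero _ hk) hdet
  · simp only [Prod.smul_fst, Prod.smul_snd, smul_pow, ← smul_add, hfermat]

theorem fermatTriples_infinite [IsDomain R] [CharZero R] [Nonempty m] {A : Matrix m m R} {n : ℕ}
    (hne : (fermatTriples A n).Nonempty) : (fermatTriples A n).Infinite := by
  obtain ⟨p, hp⟩ := hne
  have hp0 : p ≠ 0 := by
    rintro rfl
    simp [fermatTriples] at hp
  refine Set.infinite_of_injective_forall_mem (f := fun j : ℕ => ((j : R) + 1) • p) ?_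
    fun j => smul_mem_fermatTriples hp (Nat.cast_add_one_ne_zero j)
  exact (smul_left_injective R hp0).comp fun i j hij => by simpa using hij

theorem stmt_10_general (a b c : ℤ)
    (n : ℕ)
    (h : ∃ X Y Z : Matrix (Fin 2) (Fin 2) ℤ,
      !![a, b; c, 0] * X = X * !![a, b; c, 0] ∧
      !![a, b; c, 0] * Y = Y * !![a, b; c, 0] ∧
      !![a, b; c, 0] * Z = Z * !![a, b; c, 0] ∧
      (X * Y * Z).det ≠ 0 ∧
      X ^ n + Y ^ n = Z ^ n) :
    {p : Matrix (Fin 2) (Fin 2) ℤ × Matrix (Fin 2) (Fin 2) ℤ × Matrix (Fin 2) (Fin 2) ℤ |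
      !![a, b; c, 0] * p.1 = p.1 * !![a, b; c, 0] ∧
      !![a, b; c, 0] * p.2.1 = p.2.1 * !![a, b; c, 0] ∧
      !![a, b; c, 0] * p.2.2 = p.2.2 * !![a, b; c, 0] ∧
      (p.1 * p.2.1 * p.2.2).det ≠ 0 ∧
      p.1 ^ n + p.2.1 ^ n = p.2.2 ^ n}.Infinite := by
  obtain ⟨X, Y, Z, hsol⟩ := h
  exact fermatTriples_infinite ⟨(X, Y, Z), hsol⟩

theorem stmt_10 (a b c : ℤ) (hbc : b * c ≠ 0)
    (hgcd : Int.gcd a (Int.gcd b c) = 1)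
    (n : ℕ) (hn : 3 ≤ n)
    (h : ∃ X Y Z : Matrix (Fin 2) (Fin 2) ℤ,
      !![a, b; c, 0] * X = X * !![a, b; c, 0] ∧
      !![a, b; c, 0] * Y = Y * !![a, b; c, 0] ∧
      !![a, b; c, 0] * Z = Z * !![a, b; c, 0] ∧
      (X * Y * Z).det ≠ 0 ∧
      X ^ n + Y ^ n = Z ^ n) :
    {p : Matrix (Fin 2) (Fin 2) ℤ × Matrix (Fin 2) (Fin 2) ℤ × Matrix (Fin 2) (Fin 2) ℤ |
      !![a, b; c, 0] * p.1 = p.1 * !![a, b; c, 0] ∧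
      !![a, b; c, 0] * p.2.1 = p.2.1 * !![a, b; c, 0] ∧
      !![a, b; c, 0] * p.2.2 = p.2.2 * !![a, b; c, 0] ∧
      (p.1 * p.2.1 * p.2.2).det ≠ 0 ∧
      p.1 ^ n + p.2.1 ^ n = p.2.2 ^ n}.Infinite :=
  stmt_10_general a b c n h
end

section
/- Let a, b, c ∈ ℤ and m a positive integer with a² + 4*b*c = 5*m², b*c ≠ 0, gcd(a, gcd(b, c)) = 1 (so that m and a have the same parity and the entries below are integers). Then !![(11m+3a)/2, 3b; 3c, (11m−3a)/2]³ + !![8m+3a, 6b; 6c, 8m−3a]³ = !![9m+3a, 6b; 6c, 9m−3a]³. -/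
/-!
With `Y = !![3a, 6b; 6c, -3a]` the hypothesis says `Y² = 45 m²`, and the three matrices are
`(11m + Y)/2`, `8m + Y` and `9m + Y`. As these are polynomials in `Y`, the identity reduces to
`(11m + y)³ + 8 (8m + y)³ - 8 (9m + y)³ = (y² - 45m²)(y + 9m)` in `ℤ[y]`.
-/

open Polynomial

theorem add_cube_add_eight_mul_add_cube {S R : Type*} [CommRing S] [Ring R] [Algebra S R]
    (n : S) (y : R) (hy : y ^ 2 = algebraMap S R (45 * n ^ 2)) :
    (algebraMap S R (11 * n) + y) ^ 3 + 8 * (algebraMap S R (8 * n) + y) ^ 3 =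
      8 * (algebraMap S R (9 * n) + y) ^ 3 := by
  have key : ((C (11 * n) + X) ^ 3 + 8 * (C (8 * n) + X) ^ 3 : S[X]) =
      8 * (C (9 * n) + X) ^ 3 + (X ^ 2 - C (45 * n ^ 2)) * (X + C (9 * n)) := by
    simp only [map_mul, map_pow, map_ofNat]
    ring
  have := congrArg (aeval y) key
  simp only [map_add, map_mul, map_pow, map_sub, map_ofNat, aeval_X, aeval_C] at this hy ⊢
  rwa [hy, sub_self, zero_mul, add_zero] at this

theorem Int.even_add_of_sq_add_four_mul_eq {a b c m : ℤ} (h : a ^ 2 + 4 * b * c = 5 * m ^ 2) :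
    Even (a + m) := by
  have : Even (a ^ 2 + m ^ 2) := ⟨3 * m ^ 2 - 2 * b * c, by linear_combination h⟩
  simpa [Int.even_add, Int.even_pow] using this

namespace Matrix

variable {R : Type*} [CommRing R]

theorem fin_two_eq_algebraMap_add (x a b c : R) :
    !![x + a, b; c, x - a] = algebraMap R (Matrix (Fin 2) (Fin 2) R) x + !![a, b; c, -a] := by
  ext i j; fin_cases i <;> fin_cases j <;> simp [algebraMap_eq_diagonal, sub_eq_add_neg]

theorem traceless_fin_two_sq (a b c : R) :
    !![a, b; c, -a] ^ 2 = algebraMap R (Matrix (Fin 2) (Fin 2) R) (a ^ 2 + b * c) := by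
  ext i j; fin_cases i <;> fin_cases j <;> simp [sq, algebraMap_eq_diagonal] <;> ring

end Matrix

theorem stmt_13_general (a b c : ℤ) (m : ℕ)
    (h : a ^ 2 + 4 * b * c = 5 * (m : ℤ) ^ 2) :
    (!![(11 * (m : ℤ) + 3 * a) / 2, 3 * b; 3 * c, (11 * (m : ℤ) - 3 * a) / 2] :
        Matrix (Fin 2) (Fin 2) ℤ) ^ 3 +
      !![8 * (m : ℤ) + 3 * a, 6 * b; 6 * c, 8 * (m : ℤ) - 3 * a] ^ 3 =
      !![9 * (m : ℤ) + 3 * a, 6 * b; 6 * c, 9 * (m : ℤ) - 3 * a] ^ 3 := by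
  set A : Matrix (Fin 2) (Fin 2) ℤ :=
    !![(11 * (m : ℤ) + 3 * a) / 2, 3 * b; 3 * c, (11 * (m : ℤ) - 3 * a) / 2]
  set B : Matrix (Fin 2) (Fin 2) ℤ := !![8 * (m : ℤ) + 3 * a, 6 * b; 6 * c, 8 * (m : ℤ) - 3 * a]
  set C : Matrix (Fin 2) (Fin 2) ℤ := !![9 * (m : ℤ) + 3 * a, 6 * b; 6 * c, 9 * (m : ℤ) - 3 * a]
  set Y : Matrix (Fin 2) (Fin 2) ℤ := !![3 * a, 6 * b; 6 * c, -(3 * a)]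
  have hY : Y ^ 2 = algebraMap ℤ _ (45 * (m : ℤ) ^ 2) := by
    rw [Matrix.traceless_fin_two_sq]
    congr 1
    linear_combination 9 * h
  obtain ⟨t, ht⟩ := Int.even_add_of_sq_add_four_mul_eq h
  have hA : (2 : ℤ) • A = algebraMap ℤ _ (11 * m) + Y := by
    rw [← Matrix.fin_two_eq_algebraMap_add]
    ext i j; fin_cases i <;> fin_cases j <;> simp [A] <;> omega
  have hB : B = algebraMap ℤ _ (8 * m) + Y := Matrix.fin_two_eq_algebraMap_add ..
  have hC : C = algebraMap ℤ _ (9 * m) + Y := Matrix.fin_two_eq_algebraMap_add ..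
  refine smul_right_injective _ (by norm_num : (8 : ℤ) ≠ 0) ?_
  calc (8 : ℤ) • (A ^ 3 + B ^ 3) = ((2 : ℤ) • A) ^ 3 + 8 * B ^ 3 := by
        rw [_root_.smul_pow, smul_add, zsmul_eq_mul, zsmul_eq_mul]; norm_num
    _ = 8 * C ^ 3 := by
        rw [hA, hB, hC]
        exact add_cube_add_eight_mul_add_cube _ _ hY
    _ = (8 : ℤ) • C ^ 3 := by rw [zsmul_eq_mul]; norm_num

theorem stmt_13 (a b c : ℤ) (m : ℕ) (hm : 0 < m)
    (h : a ^ 2 + 4 * b * c = 5 * (m : ℤ) ^ 2) (hbc : b * c ≠ 0)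
    (hgcd : Int.gcd a (Int.gcd b c) = 1) :
    (!![(11 * (m : ℤ) + 3 * a) / 2, 3 * b; 3 * c, (11 * (m : ℤ) - 3 * a) / 2] :
        Matrix (Fin 2) (Fin 2) ℤ) ^ 3 +
      !![8 * (m : ℤ) + 3 * a, 6 * b; 6 * c, 8 * (m : ℤ) - 3 * a] ^ 3 =
      !![9 * (m : ℤ) + 3 * a, 6 * b; 6 * c, 9 * (m : ℤ) - 3 * a] ^ 3 :=
  stmt_13_general a b c m h
end

section
/- Let k be an integer with k ≠ 0 and k ≠ −1. Then −3*(1 + 4*k³) is not a perfect square. -/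
/-! If `-3 * (1 + 4 * k ^ 3) = q ^ 2`, then `(-3 + q) ^ 3 + (-3 - q) ^ 3 = (6 * k) ^ 3`, so by Fermat's
Last Theorem for exponent 3 one of the three cubes vanishes. The right-hand one cannot, since
`q ^ 2 = -3` has no solution; hence `q = ±3`, and then `k ^ 3 = -1`. -/

lemma eq_neg_one_of_neg_three_mul_one_add_four_mul_cube_eq_sq {k q : ℤ}
    (h : -3 * (1 + 4 * k ^ 3) = q ^ 2) : k = -1 := by
  have h6k : 6 * k ≠ 0 := by
    rintro h6k
    obtain rfl : k = 0 := by omega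
    nlinarith [sq_nonneg q]
  have hcubes : (-3 + q) ^ 3 + (-3 - q) ^ 3 = (6 * k) ^ 3 := by linear_combination 18 * h
  have hq : -3 + q = 0 ∨ -3 - q = 0 := by
    by_contra! hq
    exact fermatLastTheoremFor_iff_int.mp fermatLastTheoremThree _ _ _ hq.1 hq.2 h6k hcubes
  obtain rfl | rfl : q = 3 ∨ q = -3 := by omega
  all_goals exact (Odd.pow_inj (by decide)).mp (by linarith : k ^ 3 = (-1) ^ 3)

theorem stmt_14_general (k : ℤ) (hk1 : k ≠ -1) :
    ¬ ∃ q : ℤ, -3 * (1 + 4 * k ^ 3) = q ^ 2 :=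
  fun ⟨_, h⟩ => hk1 (eq_neg_one_of_neg_three_mul_one_add_four_mul_cube_eq_sq h)

theorem stmt_14 (k : ℤ) (hk0 : k ≠ 0) (hk1 : k ≠ -1) :
    ¬ ∃ q : ℤ, -3 * (1 + 4 * k ^ 3) = q ^ 2 :=
  stmt_14_general k hk1
end

section
/- Let a, b, c ∈ ℤ and m a positive integer with a² + 4*b*c = −7*m², b*c ≠ 0, and gcd(a, gcd(b, c)) = 1 (so a and m have the same parity). Then !![(m+a)/2, b; c, (m−a)/2]⁴ + !![(m−a)/2, −b; −c, (m+a)/2]⁴ = (m • 1)⁴ in M₂(ℤ). -/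
/-!
With `k = (m + a) / 2`, an integer because `(m + a)²` is even by the hypothesis, the first matrix
is `X = !![k, b; c, m - k]` and the second is `m • 1 - X`. Since `tr X = m` and `det X = 2 m²`,
Cayley–Hamilton makes `X` a root of `T² - m T + 2 m²`, which divides
`T⁴ + (m - T)⁴ - m⁴ = 2 (T² - m T) (T² - m T + 2 m²)`.
-/

open Polynomial

theorem pow_four_add_algebraMap_sub_pow_four {R A : Type*} [CommRing R] [Ring A] [Algebra R A]
    (t : R) (x : A) (hx : aeval x (X ^ 2 - C t * X + C (2 * t ^ 2)) = 0) :
    x ^ 4 + (algebraMap R A t - x) ^ 4 = algebraMap R A t ^ 4 := by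
  have key : (X ^ 4 + (C t - X) ^ 4 - C t ^ 4 : R[X]) =
      2 * (X ^ 2 - C t * X) * (X ^ 2 - C t * X + C (2 * t ^ 2)) := by
    rw [C_mul, C_pow, C_ofNat]
    ring
  have := congrArg (aeval x) key
  rw [map_mul, hx, mul_zero] at this
  simpa [sub_eq_zero] using this

theorem Matrix.pow_four_add_smul_one_sub_pow_four {R : Type*} [CommRing R] [Nontrivial R]
    (M : Matrix (Fin 2) (Fin 2) R) {t : R} (htr : M.trace = t) (hdet : M.det = 2 * t ^ 2) :
    M ^ 4 + (t • 1 - M) ^ 4 = (t • 1) ^ 4 := by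
  rw [← Algebra.algebraMap_eq_smul_one]
  refine pow_four_add_algebraMap_sub_pow_four _ _ ?_
  rw [← hdet, ← htr, ← M.charpoly_fin_two]
  exact M.aeval_self_charpoly

theorem stmt_16_general (a b c : ℤ) (m : ℕ)
    (h : a ^ 2 + 4 * b * c = -7 * (m : ℤ) ^ 2) :
    (!![((m : ℤ) + a) / 2, b; c, ((m : ℤ) - a) / 2] : Matrix (Fin 2) (Fin 2) ℤ) ^ 4 +
      !![((m : ℤ) - a) / 2, -b; -c, ((m : ℤ) + a) / 2] ^ 4 =
      ((m : ℤ) • (1 : Matrix (Fin 2) (Fin 2) ℤ)) ^ 4 := by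
  obtain ⟨k, hk⟩ : Even ((m : ℤ) + a) :=
    (Int.even_pow' two_ne_zero).mp ⟨-3 * m ^ 2 - 2 * b * c + m * a, by linear_combination h⟩
  have hp : ((m : ℤ) + a) / 2 = k := by omega
  have hq : ((m : ℤ) - a) / 2 = m - k := by omega
  set M : Matrix (Fin 2) (Fin 2) ℤ := !![k, b; c, m - k]
  have htr : M.trace = m := by simp [M, Matrix.trace_fin_two]
  have hdet : M.det = 2 * (m : ℤ) ^ 2 := by
    rw [Matrix.det_fin_two_of]
    have ha : a = 2 * k - m := by omega
    subst ha
    linarith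
  have hsecond : !![(m : ℤ) - k, -b; -c, k] = (m : ℤ) • 1 - M := by
    ext i j
    fin_cases i <;> fin_cases j <;> simp [M, Matrix.one_fin_two]
  rw [hp, hq, hsecond]
  exact M.pow_four_add_smul_one_sub_pow_four htr hdet

theorem stmt_16 (a b c : ℤ) (m : ℕ) (hm : 0 < m)
    (h : a ^ 2 + 4 * b * c = -7 * (m : ℤ) ^ 2) (hbc : b * c ≠ 0)
    (hgcd : Int.gcd a (Int.gcd b c) = 1) :
    (!![((m : ℤ) + a) / 2, b; c, ((m : ℤ) - a) / 2] : Matrix (Fin 2) (Fin 2) ℤ) ^ 4 +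
      !![((m : ℤ) - a) / 2, -b; -c, ((m : ℤ) + a) / 2] ^ 4 =
      ((m : ℤ) • (1 : Matrix (Fin 2) (Fin 2) ℤ)) ^ 4 :=
  stmt_16_general a b c m h
end

section
/- Let K be a quadratic field with ring of integers O_K, and let x ∈ O_K admit a positive integer t with x^t ∈ ℤ; let E(x) be the least such t. Then for any natural number n, x^n ∈ ℤ if and only if E(x) divides n. -/
/-! The exponents `t` with `x ^ t ∈ ℤ` form a submonoid of `ℕ` that is closed under differences:
if `x ^ a = m ≠ 0` and `x ^ (a + b) ∈ ℤ`, then `m` divides `x ^ (a + b)` in `𝓞 K`, hence in `ℤ`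
(take norms), so `x ^ b ∈ ℤ`. Such a set consists exactly of the multiples of its least positive
element. -/

open NumberField

theorem Nat.mem_iff_sInf_pos_mem_dvd {T : Set ℕ} (zero_mem : 0 ∈ T)
    (add_mem : ∀ a b, a ∈ T → b ∈ T → a + b ∈ T)
    (mem_of_add_mem : ∀ a b, a ∈ T → a + b ∈ T → b ∈ T) (n : ℕ) :
    n ∈ T ↔ sInf {t | 0 < t ∧ t ∈ T} ∣ n := by
  set E := sInf {t | 0 < t ∧ t ∈ T}
  rcases Set.eq_empty_or_nonempty {t | 0 < t ∧ t ∈ T} with hempty | hne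
  · have hE : E = 0 := by simp only [E, hempty, Nat.sInf_empty]
    rw [hE, zero_dvd_iff]
    refine ⟨fun hn => Nat.eq_zero_of_not_pos fun hpos => ?_, fun hn => hn ▸ zero_mem⟩
    exact hempty.subset ⟨hpos, hn⟩
  obtain ⟨hEpos, hET⟩ : 0 < E ∧ E ∈ T := Nat.sInf_mem hne
  have mul_mem : ∀ k, E * k ∈ T := by
    intro k
    induction k with
    | zero => exact zero_mem
    | succ k ih => exact add_mem _ _ ih hET
  refine ⟨fun hn => Nat.dvd_of_mod_eq_zero ?_, fun ⟨k, hk⟩ => hk ▸ mul_mem k⟩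
  have hmod : n % E ∈ T := mem_of_add_mem _ _ (mul_mem _) (by rwa [Nat.div_add_mod])
  by_contra hne0
  exact Nat.notMem_of_lt_sInf (Nat.mod_lt n hEpos) ⟨Nat.pos_of_ne_zero hne0, hmod⟩

theorem NumberField.RingOfIntegers.intCast_dvd_intCast {K : Type*} [Field K] [NumberField K]
    {a b : ℤ} : (a : 𝓞 K) ∣ b ↔ a ∣ b := by
  refine ⟨fun h => ?_, Int.cast_dvd_cast a b⟩
  have hnorm := map_dvd (Algebra.norm ℤ) h
  rw [← eq_intCast (algebraMap ℤ (𝓞 K)), ← eq_intCast (algebraMap ℤ (𝓞 K)),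
    Algebra.norm_algebraMap, Algebra.norm_algebraMap] at hnorm
  exact (Int.pow_dvd_pow_iff Module.finrank_pos.ne').mp hnorm

theorem exists_intCast_pow_add {R : Type*} [Ring R] {x : R} {a b : ℕ}
    (ha : ∃ m : ℤ, x ^ a = m) (hb : ∃ m : ℤ, x ^ b = m) : ∃ m : ℤ, x ^ (a + b) = m := by
  obtain ⟨m, hm⟩ := ha
  obtain ⟨m', hm'⟩ := hb
  exact ⟨m * m', by rw [pow_add, hm, hm', Int.cast_mul]⟩

theorem NumberField.RingOfIntegers.exists_intCast_pow_of_pow_add {K : Type*} [Field K]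
    [NumberField K] {x : 𝓞 K} {a b : ℕ} (ha : ∃ m : ℤ, x ^ a = m)
    (hab : ∃ m : ℤ, x ^ (a + b) = m) : ∃ m : ℤ, x ^ b = m := by
  obtain ⟨m, hm⟩ := ha
  obtain ⟨m', hm'⟩ := hab
  rcases eq_or_ne m 0 with rfl | hm0
  · have hx : x = 0 := eq_zero_of_pow_eq_zero (by rw [hm, Int.cast_zero])
    exact ⟨0 ^ b, by rw [hx, Int.cast_pow, Int.cast_zero]⟩
  have hdvd : (m : 𝓞 K) ∣ m' := ⟨x ^ b, by rw [← hm, ← pow_add, hm']⟩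
  obtain ⟨k, rfl⟩ := intCast_dvd_intCast.mp hdvd
  refine ⟨k, mul_left_cancel₀ (Int.cast_ne_zero.mpr hm0) ?_⟩
  rw [← hm, ← pow_add, hm', Int.cast_mul, hm]

theorem stmt_18_general (K : Type*) [Field K] [NumberField K]
    (x : NumberField.RingOfIntegers K)
    (n : ℕ) :
    (∃ m : ℤ, x ^ n = (m : NumberField.RingOfIntegers K)) ↔
      sInf {t : ℕ | 0 < t ∧ ∃ m : ℤ, x ^ t = (m : NumberField.RingOfIntegers K)} ∣ n :=
  Nat.mem_iff_sInf_pos_mem_dvd (T := {t | ∃ m : ℤ, x ^ t = m}) ⟨1, by rw [pow_zero, Int.cast_one]⟩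
    (fun _ _ => exists_intCast_pow_add) (fun _ _ => RingOfIntegers.exists_intCast_pow_of_pow_add) n

theorem stmt_18 (K : Type*) [Field K] [NumberField K]
    (hK : Module.finrank ℚ K = 2)
    (x : NumberField.RingOfIntegers K)
    (h : ∃ t : ℕ, 0 < t ∧ ∃ m : ℤ, x ^ t = (m : NumberField.RingOfIntegers K))
    (n : ℕ) :
    (∃ m : ℤ, x ^ n = (m : NumberField.RingOfIntegers K)) ↔
      sInf {t : ℕ | 0 < t ∧ ∃ m : ℤ, x ^ t = (m : NumberField.RingOfIntegers K)} ∣ n :=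
  stmt_18_general K x n
end
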